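/- Let X_1, …, X_n, X be independent random variables each uniformly distributed on (0,1), with X_{(1)} ≤ … ≤ X_{(n)} the order statistics of X_1, …, X_n. Let 1 ≤ l ≤ n−1 be an integer and let α satisfy l/(n+1) ≤ α ≤ (l+1)/(n+1). Define q̂ = (1 − α(n+1) + l)·X_{(l)} + (α(n+1) − l)·X_{(l+1)}. Then P(X ≤ q̂) = α. -/

import Mathlib

/-!
Conditioning on the first `n` observations, `P(X ≤ g(X₁,…,Xₙ)) = E[g(X₁,…,Xₙ)]` whenever `g`
takes values in `[0,1]`, since the uniform distribution function is the identity there. As `q̂` is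
a convex combination of `X₍ₗ₎` and `X₍ₗ₊₁₎`, by linearity it remains to show
`E[X₍ₖ₎] = k/(n+1)`. Applying the same identity to `g = X₍ₖ₎` turns this into
`P(X ≤ X₍ₖ₎) = k/(n+1)`: the event says that fewer than `k` of the `Xᵢ` lie below `X`, i.e. that
`X` has rank `< k` among `n+1` exchangeable, almost surely distinct variables, and all `n+1` ranks
are equally likely.
-/

open MeasureTheory

/-- The `l`-th order statistic (1-based index `l = (k : ℕ) + 1`) of the finite family of
random variables `X i`, realized by sorting the sample at each outcome `ω`. -/
noncomputable def orderStat {Ω : Type*} {n : ℕ} (X : Fin n → Ω → ℝ) (k : Fin n) (ω : Ω) : ℝ :=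
  X (Tuple.sort (fun i => X i ω) k) ω

open Finset

namespace Tuple

variable {α : Type*} [LinearOrder α] {n : ℕ}

theorem card_filter_comp_perm (σ : Equiv.Perm (Fin n)) (p : Fin n → Prop) [DecidablePred p] :
    #{i | p (σ i)} = #{i | p i} := by
  simp only [card_filter]
  exact Equiv.sum_comp σ fun i => if p i then 1 else 0

theorem le_apply_sort_iff (x : Fin n → α) (k : Fin n) (t : α) :
    t ≤ x (sort x k) ↔ #{i | x i < t} ≤ k := by
  have h := lt_card_lt_iff_apply_lt_of_monotone (j := k) (a := t) (monotone_sort x)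
  rw [Function.comp_def, card_filter_comp_perm (sort x) (x · < t)] at h
  simpa using h.not.symm

def rank (x : Fin n → α) (m : Fin n) : ℕ := #{i | x i < x m}

theorem rank_comp_perm (x : Fin n → α) (σ : Equiv.Perm (Fin n)) (m : Fin n) :
    rank (x ∘ σ) m = rank x (σ m) :=
  card_filter_comp_perm σ (x · < x (σ m))

theorem rank_lt (x : Fin n → α) (m : Fin n) : rank x m < n := by
  simpa [rank] using card_lt_univ_of_notMem (s := {i | x i < x m}) (x := m) (by simp)

theorem rank_lt_rank {x : Fin n → α} {m m' : Fin n} (h : x m < x m') : rank x m < rank x m' :=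
  card_lt_card ⟨fun i hi => by simp_all [(mem_filter.1 hi).2.trans h],
    fun hss => lt_irrefl _ (mem_filter.1 (hss (by simpa))).2⟩

theorem rank_injective {x : Fin n → α} (hx : Function.Injective x) :
    Function.Injective (rank x) := by
  intro m m' h
  by_contra hne
  rcases lt_or_gt_of_ne (hx.ne hne) with hlt | hlt
  · exact (rank_lt_rank hlt).ne h
  · exact (rank_lt_rank hlt).ne' h

theorem exists_rank_eq {x : Fin n → α} (hx : Function.Injective x) {j : ℕ} (hj : j < n) :
    ∃ m, rank x m = j := by
  have himage : univ.image (rank x) = range n :=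
    eq_of_subset_of_card_le
      (fun _ h => by obtain ⟨m, -, rfl⟩ := mem_image.1 h; simpa using rank_lt x m)
      (by simp [card_image_of_injective _ (rank_injective hx)])
  simpa [← himage] using (mem_range.2 hj : j ∈ range n)

theorem last_le_apply_sort_init_iff (x : Fin (n + 1) → α) (k : Fin n) :
    x (Fin.last n) ≤ Fin.init x (sort (Fin.init x) k) ↔ rank x (Fin.last n) ≤ k := by
  rw [le_apply_sort_iff, rank, card_filter, card_filter, Fin.sum_univ_castSucc]
  simp only [lt_self_iff_false, if_false, add_zero]
  rfl

end Tuple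

open Tuple

section Measure

variable {β : Type*} [MeasurableSpace β] (μ : Measure β) [SigmaFinite μ]

theorem pi_setOf_apply_removeNth {N : ℕ} (i : Fin (N + 1)) {S : Set (β × (Fin N → β))}
    (hS : MeasurableSet S) :
    Measure.pi (fun _ => μ) {x | (x i, i.removeNth x) ∈ S}
      = ∫⁻ y, μ {t | (t, y) ∈ S} ∂Measure.pi fun _ => μ :=
  ((measurePreserving_piFinSuccAbove (fun _ => μ) i).measure_preimage
    hS.nullMeasurableSet).trans (Measure.prod_apply_symm hS)

theorem ae_pi_injective [MeasurableEq β] [NullSingletonClass μ] {N : ℕ} :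
    ∀ᵐ x ∂Measure.pi (fun _ : Fin N => μ), Function.Injective x := by
  cases N with
  | zero => exact .of_forall fun x => Function.injective_of_subsingleton x
  | succ N =>
    refine ae_all_iff.2 fun i => ae_all_iff.2 fun j => ?_
    rcases eq_or_ne i j with rfl | hij
    · exact .of_forall fun _ _ => rfl
    obtain ⟨j', rfl⟩ := Fin.exists_succAbove_eq hij.symm
    have hS : MeasurableSet {q : β × (Fin N → β) | q.1 = q.2 j'} :=
      measurableSet_eq_fun measurable_fst ((measurable_pi_apply j').comp measurable_snd)
    refine ae_iff.2 (measure_mono_null (fun x hx => (Classical.not_imp.1 hx).1)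
      ((pi_setOf_apply_removeNth μ i hS).trans ?_))
    simp [measure_singleton]

theorem measurePreserving_comp_perm {ι : Type*} [Fintype ι] (σ : Equiv.Perm ι) :
    MeasurePreserving (fun x : ι → β => x ∘ σ) (Measure.pi fun _ => μ)
      (Measure.pi fun _ => μ) :=
  measurePreserving_arrowCongr' (fun _ => μ) (fun _ => μ) σ.symm (MeasurableEquiv.refl β)
    fun _ => .id μ

end Measure

theorem measurable_card_filter {Ω ι : Type*} [MeasurableSpace Ω] [Fintype ι]
    {p : ι → Ω → Prop} [∀ i ω, Decidable (p i ω)] (hp : ∀ i, MeasurableSet {ω | p i ω}) :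
    Measurable fun ω => #{i | p i ω} := by
  simp only [card_filter]
  exact Finset.measurable_sum _ fun i _ => Measurable.ite (hp i) measurable_const measurable_const

theorem measurableSet_rank_eq {n : ℕ} (m : Fin n) (j : ℕ) :
    MeasurableSet {x : Fin n → ℝ | rank x m = j} :=
  measurable_card_filter
    (fun i => measurableSet_lt (measurable_pi_apply i) (measurable_pi_apply m))
    (measurableSet_singleton j)

theorem measurable_apply_sort {n : ℕ} (k : Fin n) :
    Measurable fun y : Fin n → ℝ => y (sort y k) := by
  refine measurable_of_Ici fun t => ?_
  have hpre : (fun y : Fin n → ℝ => y (sort y k)) ⁻¹' Set.Ici t = {y | #{i | y i < t} ≤ k} :=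
    Set.ext fun y => le_apply_sort_iff y k t
  rw [hpre]
  exact measurable_card_filter (fun i => measurableSet_lt (measurable_pi_apply i) measurable_const)
    measurableSet_Iic

section Rank

variable (μ : Measure ℝ) [IsProbabilityMeasure μ] [NullSingletonClass μ]

open scoped ENNReal

theorem measure_rank_eq {n : ℕ} (m : Fin n) {j : ℕ} (hj : j < n) :
    Measure.pi (fun _ => μ) {x | rank x m = j} = (n : ℝ≥0∞)⁻¹ := by
  set A : Fin n → Set (Fin n → ℝ) := fun m => {x | rank x m = j}
  have hA : ∀ m, MeasurableSet (A m) := fun m => measurableSet_rank_eq m j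
  have hsame : ∀ m', Measure.pi (fun _ => μ) (A m') = Measure.pi (fun _ => μ) (A m) := by
    intro m'
    rw [← (measurePreserving_comp_perm μ (Equiv.swap m' m)).measure_preimage
      (hA m).nullMeasurableSet]
    congr 1
    ext x
    simp [A, rank_comp_perm]
  have hinj := ae_pi_injective μ (N := n)
  have hunion : Measure.pi (fun _ => μ) (⋃ m, A m) = 1 := by
    rw [measure_congr (ae_eq_univ.2 (measure_mono_null (fun x hx hinj => ?_) (ae_iff.1 hinj))),
      measure_univ]
    obtain ⟨m, hm⟩ := exists_rank_eq hinj hj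
    exact hx (Set.mem_iUnion.2 ⟨m, hm⟩)
  have hdisj : Pairwise (Function.onFun (AEDisjoint (Measure.pi fun _ => μ)) A) := fun a b hab =>
    measure_mono_null (fun x (hx : x ∈ A a ∩ A b) hinj =>
      hab (rank_injective hinj (hx.1.trans hx.2.symm))) (ae_iff.1 hinj)
  have hsum : ∑ m', Measure.pi (fun _ => μ) (A m') = 1 := by
    rw [← hunion, measure_iUnion₀ hdisj fun m => (hA m).nullMeasurableSet,
      tsum_fintype (L := SummationFilter.unconditional _)]
  rw [sum_congr rfl fun m' _ => hsame m', sum_const, card_univ, Fintype.card_fin,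
    nsmul_eq_mul, mul_comm] at hsum
  exact ENNReal.eq_inv_of_mul_eq_one_left hsum

theorem measure_last_le_apply_sort_init {n : ℕ} (k : Fin n) :
    Measure.pi (fun _ => μ) {x | x (Fin.last n) ≤ Fin.init x (sort (Fin.init x) k)}
      = ((k : ℝ≥0∞) + 1) / ((n : ℝ≥0∞) + 1) := by
  have hunion : {x | x (Fin.last n) ≤ Fin.init x (sort (Fin.init x) k)}
      = ⋃ j ∈ range (k + 1), {x : Fin (n + 1) → ℝ | rank x (Fin.last n) = j} := by
    ext x
    simp [last_le_apply_sort_init_iff]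
  rw [hunion, measure_biUnion_finset
    (fun a _ b _ hab => Set.disjoint_left.2 fun x ha hb => hab (ha.symm.trans hb))
    (fun j _ => measurableSet_rank_eq (Fin.last n) j),
    sum_congr rfl fun j hj => measure_rank_eq μ _ (by simp at hj; omega)]
  simp [div_eq_mul_inv]

end Rank

theorem lintegral_ofReal_mul_add_mul {Ω : Type*} [MeasurableSpace Ω] {μ : Measure Ω}
    {f g : Ω → ℝ} (hf : AEMeasurable f μ) (hf0 : 0 ≤ᵐ[μ] f) (hg0 : 0 ≤ᵐ[μ] g) {a b : ℝ} (ha : 0 ≤ a)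
    (hb : 0 ≤ b) :
    ∫⁻ ω, ENNReal.ofReal (a * f ω + b * g ω) ∂μ
      = ENNReal.ofReal a * ∫⁻ ω, ENNReal.ofReal (f ω) ∂μ
        + ENNReal.ofReal b * ∫⁻ ω, ENNReal.ofReal (g ω) ∂μ := by
  rw [← lintegral_const_mul' _ _ ENNReal.ofReal_ne_top,
    ← lintegral_const_mul' _ _ ENNReal.ofReal_ne_top,
    ← lintegral_add_left' (hf.ennreal_ofReal.const_mul _)]
  refine lintegral_congr_ae ?_
  filter_upwards [hf0, hg0] with ω hfω hgω
  rw [ENNReal.ofReal_add (mul_nonneg ha hfω) (mul_nonneg hb hgω), ENNReal.ofReal_mul ha,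
    ENNReal.ofReal_mul hb]

section Uniform

local notation "𝕌" => volume.restrict (Set.Ioo (0 : ℝ) 1)

instance : IsProbabilityMeasure 𝕌 := ⟨by simp⟩

theorem volume_restrict_Ioo_zero_one_Iic {c : ℝ} (hc : c ∈ Set.Icc 0 1) :
    𝕌 (Set.Iic c) = ENNReal.ofReal c := by
  rw [Measure.restrict_apply measurableSet_Iic]
  refine le_antisymm ?_ ?_
  · calc volume (Set.Iic c ∩ Set.Ioo 0 1) ≤ volume (Set.Icc 0 c) :=
          measure_mono fun t ht => ⟨ht.2.1.le, ht.1⟩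
      _ = ENNReal.ofReal c := by simp
  · calc ENNReal.ofReal c = volume (Set.Ioo 0 c) := by simp
      _ ≤ volume (Set.Iic c ∩ Set.Ioo 0 1) :=
          measure_mono fun t ht => ⟨ht.2.le, ht.1, ht.2.trans_le hc.2⟩

theorem ae_forall_mem_Ioo {n : ℕ} :
    ∀ᵐ y ∂Measure.pi (fun _ : Fin n => 𝕌), ∀ i, y i ∈ Set.Ioo 0 1 :=
  ae_all_iff.2 fun _ => Measure.tendsto_eval_ae_ae.eventually (ae_restrict_mem measurableSet_Ioo)

theorem measure_last_le_comp_init_uniform {n : ℕ} {g : (Fin n → ℝ) → ℝ} (hg : Measurable g)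
    (hg01 : ∀ᵐ y ∂Measure.pi (fun _ => 𝕌), g y ∈ Set.Icc 0 1) :
    Measure.pi (fun _ => 𝕌) {x | x (Fin.last n) ≤ g (Fin.init x)}
      = ∫⁻ y, ENNReal.ofReal (g y) ∂Measure.pi fun _ => 𝕌 := by
  have hS : MeasurableSet {q : ℝ × (Fin n → ℝ) | q.1 ≤ g q.2} :=
    measurableSet_le measurable_fst (hg.comp measurable_snd)
  simp_rw [← Fin.removeNth_last]
  exact (pi_setOf_apply_removeNth 𝕌 (Fin.last n) hS).trans
    (lintegral_congr_ae (hg01.mono fun y hy => volume_restrict_Ioo_zero_one_Iic hy))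

theorem lintegral_ofReal_apply_sort_uniform {n : ℕ} (k : Fin n) :
    ∫⁻ y, ENNReal.ofReal (y (sort y k)) ∂Measure.pi (fun _ => 𝕌)
      = ENNReal.ofReal (((k : ℝ) + 1) / ((n : ℝ) + 1)) := by
  rw [← measure_last_le_comp_init_uniform (measurable_apply_sort k)
    (ae_forall_mem_Ioo.mono fun y hy => Set.Ioo_subset_Icc_self (hy _)),
    measure_last_le_apply_sort_init, ENNReal.ofReal_div_of_pos (by positivity)]
  simp [ENNReal.ofReal_add]

theorem measure_le_interpolated_orderStat {Ω : Type*} [MeasurableSpace Ω] {P : Measure Ω}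
    [IsProbabilityMeasure P] {n : ℕ} {X : Fin (n + 1) → Ω → ℝ} (hXm : ∀ i, Measurable (X i))
    (hindep : ProbabilityTheory.iIndepFun X P) (hunif : ∀ i, P.map (X i) = 𝕌)
    (k₁ k₂ : Fin n) {a b : ℝ} (ha : 0 ≤ a) (hb : 0 ≤ b) (hab : a + b = 1) :
    P {ω | X (Fin.last n) ω ≤ a * orderStat (fun i : Fin n => X i.castSucc) k₁ ω
        + b * orderStat (fun i : Fin n => X i.castSucc) k₂ ω}
      = ENNReal.ofReal ((a * (k₁ + 1) + b * (k₂ + 1)) / (n + 1)) := by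
  set q : (Fin n → ℝ) → ℝ := fun y => a * y (sort y k₁) + b * y (sort y k₂)
  have hq : Measurable q :=
    ((measurable_apply_sort k₁).const_mul a).add ((measurable_apply_sort k₂).const_mul b)
  have hq_mem : ∀ᵐ y ∂Measure.pi (fun _ => 𝕌), q y ∈ Set.Icc 0 1 :=
    ae_forall_mem_Ioo.mono fun y hy =>
      convex_Icc (0 : ℝ) 1 (Set.Ioo_subset_Icc_self (hy _)) (Set.Ioo_subset_Icc_self (hy _))
        ha hb hab
  have hS : MeasurableSet {x : Fin (n + 1) → ℝ | x (Fin.last n) ≤ q (Fin.init x)} :=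
    measurableSet_le (measurable_pi_apply _)
      (hq.comp (measurable_pi_lambda _ fun i => measurable_pi_apply _))
  have hlaw : P.map (fun ω i => X i ω) = Measure.pi fun _ => 𝕌 := by
    rw [(ProbabilityTheory.iIndepFun_iff_map_fun_eq_pi_map fun i => (hXm i).aemeasurable).1
      hindep]
    simp_rw [hunif]
  have horderStat_nonneg (k : Fin n) : ∀ᵐ y ∂Measure.pi (fun _ => 𝕌), 0 ≤ y (sort y k) :=
    ae_forall_mem_Ioo.mono fun y hy => (hy _).1.le
  calc P _ = Measure.pi (fun _ => 𝕌) {x | x (Fin.last n) ≤ q (Fin.init x)} := by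
        rw [← hlaw, Measure.map_apply (measurable_pi_lambda _ hXm) hS]
        rfl
    _ = ∫⁻ y, ENNReal.ofReal (q y) ∂Measure.pi fun _ => 𝕌 :=
        measure_last_le_comp_init_uniform hq hq_mem
    _ = ENNReal.ofReal a * ENNReal.ofReal ((k₁ + 1) / (n + 1))
          + ENNReal.ofReal b * ENNReal.ofReal ((k₂ + 1) / (n + 1)) := by
        rw [lintegral_ofReal_mul_add_mul (measurable_apply_sort k₁).aemeasurable
          (horderStat_nonneg k₁) (horderStat_nonneg k₂) ha hb, lintegral_ofReal_apply_sort_uniform,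
          lintegral_ofReal_apply_sort_uniform]
    _ = _ := by
        rw [← ENNReal.ofReal_mul ha, ← ENNReal.ofReal_mul hb,
          ← ENNReal.ofReal_add (by positivity) (by positivity)]
        ring_nf

end Uniform

/-- **Exact coverage of the interpolated quantile estimator.** Let `X 1, …, X n, X` be i.i.d.
uniform on `(0,1)` (here `X = X (Fin.last n)` and the order statistics are those of the first
`n` variables), `1 ≤ l ≤ n - 1` and `l/(n+1) ≤ α ≤ (l+1)/(n+1)`.  With
`q̂ = (1 - α(n+1) + l)·X₍l₎ + (α(n+1) - l)·X₍l+1₎`, one has `P(X ≤ q̂) = α`. -/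
theorem coverage_interpolated_quantile_uniform {Ω : Type*} [MeasurableSpace Ω]
    (P : Measure Ω) [IsProbabilityMeasure P]
    (n : ℕ)
    (X : Fin (n + 1) → Ω → ℝ) (hXm : ∀ i, Measurable (X i))
    (hindep : ProbabilityTheory.iIndepFun X P)
    (hunif : ∀ i, P.map (X i) = volume.restrict (Set.Ioo (0 : ℝ) 1))
    (l : ℕ) (hl1 : 1 ≤ l) (hl2 : l ≤ n - 1)
    (α : ℝ) (hα1 : (l : ℝ) / ((n : ℝ) + 1) ≤ α) (hα2 : α ≤ ((l : ℝ) + 1) / ((n : ℝ) + 1)) :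
    P {ω | X (Fin.last n) ω ≤
        (1 - α * ((n : ℝ) + 1) + l) *
            orderStat (fun i : Fin n => X i.castSucc) ⟨l - 1, by omega⟩ ω
          + (α * ((n : ℝ) + 1) - l) *
            orderStat (fun i : Fin n => X i.castSucc) ⟨l, by omega⟩ ω} =
      ENNReal.ofReal α := by
  have hn : (0 : ℝ) < n + 1 := by positivity
  rw [measure_le_interpolated_orderStat hXm hindep hunif _ _
    (by rw [le_div_iff₀ hn] at hα2; linarith) (by rw [div_le_iff₀ hn] at hα1; linarith) (by ring)]
  congr 1
  simp only [Nat.cast_sub hl1, Nat.cast_one]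
  field_simp
  ring
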